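/- Let μ < 0, let I be a nonempty finite index set with probability weights w_i > 0 satisfying Σ_i w_i = 1, and for each i ∈ I and each coordinate j ∈ {1,…,n} let a_{ij} ≥ 0 and g_{ij} ≥ 0 be constants. Define r_i(p) = Σ_j a_{ij} · log(1 + p_j · g_{ij}) for p in the nonnegative orthant {p ∈ ℝ^n : p_j ≥ 0 for all j}. Then the function G(p) = (1/μ)·log(Σ_{i∈I} w_i · exp(μ · r_i(p))) is concave on the nonnegative orthant. -/

import Mathlib

/-!
Each rate `r i p = ∑ j, a i j * log (1 + p j * g i j)` is a nonnegative combination of logarithms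
of affine functions, hence concave, so `μ * r i` is convex. A positively weighted log-sum-exp of
convex functions is convex: from `exp (f (a • x + b • y)) ≤ exp (f x) ^ a * exp (f y) ^ b` and
Hölder's inequality `∑ w x^a y^b ≤ (∑ w x)^a (∑ w y)^b` one gets the convexity inequality after
taking logarithms. Multiplying by `1 / μ < 0` turns convexity into concavity.
-/

open Real Finset

section

variable {ι E : Type*} [AddCommGroup E] [Module ℝ E] {S : Set E}

theorem ConcaveOn.const_mul_of_nonpos {c : ℝ} (hc : c ≤ 0) {f : E → ℝ} (hf : ConcaveOn ℝ S f) :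
    ConvexOn ℝ S fun x => c * f x := by
  refine ⟨hf.1, fun x hx y hy a b ha hb hab => ?_⟩
  have := hf.2 hx hy ha hb hab
  simp only [smul_eq_mul] at *
  nlinarith

theorem ConvexOn.const_mul_of_nonpos {c : ℝ} (hc : c ≤ 0) {f : E → ℝ} (hf : ConvexOn ℝ S f) :
    ConcaveOn ℝ S fun x => c * f x := by
  refine ⟨hf.1, fun x hx y hy a b ha hb hab => ?_⟩
  have := hf.2 hx hy ha hb hab
  simp only [smul_eq_mul] at *
  nlinarith

theorem ConcaveOn.sum {s : Finset ι} {f : ι → E → ℝ} (hS : Convex ℝ S)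
    (hf : ∀ i ∈ s, ConcaveOn ℝ S (f i)) : ConcaveOn ℝ S fun x => ∑ i ∈ s, f i x := by
  classical
  induction s using Finset.induction_on with
  | empty => simpa using concaveOn_const (0 : ℝ) hS
  | insert i s hi ih =>
    simp_rw [sum_insert hi]
    exact (hf i (mem_insert_self i s)).add (ih fun j hj => hf j (mem_insert_of_mem hj))

theorem Real.sum_mul_rpow_mul_rpow_le {s : Finset ι} {w x y : ι → ℝ}
    (hw : ∀ i ∈ s, 0 ≤ w i) (hx : ∀ i ∈ s, 0 ≤ x i) (hy : ∀ i ∈ s, 0 ≤ y i)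
    (hX : 0 < ∑ i ∈ s, w i * x i) (hY : 0 < ∑ i ∈ s, w i * y i)
    {a b : ℝ} (ha : 0 ≤ a) (hb : 0 ≤ b) (hab : a + b = 1) :
    ∑ i ∈ s, w i * (x i ^ a * y i ^ b) ≤
      (∑ i ∈ s, w i * x i) ^ a * (∑ i ∈ s, w i * y i) ^ b := by
  set X := ∑ i ∈ s, w i * x i
  set Y := ∑ i ∈ s, w i * y i
  calc ∑ i ∈ s, w i * (x i ^ a * y i ^ b)
      = X ^ a * Y ^ b * ∑ i ∈ s, w i * ((x i / X) ^ a * (y i / Y) ^ b) := by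
        rw [mul_sum]
        refine sum_congr rfl fun i hi => ?_
        rw [div_rpow (hx i hi) hX.le, div_rpow (hy i hi) hY.le]
        field_simp
    _ ≤ X ^ a * Y ^ b * ∑ i ∈ s, w i * (a * (x i / X) + b * (y i / Y)) := by
        gcongr with i hi
        · exact hw i hi
        · exact geom_mean_le_arith_mean2_weighted ha hb (div_nonneg (hx i hi) hX.le)
            (div_nonneg (hy i hi) hY.le) hab
    _ = X ^ a * Y ^ b := by
        have : ∑ i ∈ s, w i * (a * (x i / X) + b * (y i / Y)) = a * (X / X) + b * (Y / Y) := by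
          simp only [X, Y, sum_div, mul_sum, ← sum_add_distrib]
          refine sum_congr rfl fun i _ => ?_
          ring
        rw [this, div_self hX.ne', div_self hY.ne', mul_one, mul_one, hab, mul_one]

theorem ConvexOn.log_sum_mul_exp {s : Finset ι} (hs : s.Nonempty) {w : ι → ℝ}
    (hw : ∀ i ∈ s, 0 < w i) {f : ι → E → ℝ} (hf : ∀ i ∈ s, ConvexOn ℝ S (f i)) :
    ConvexOn ℝ S fun x => log (∑ i ∈ s, w i * exp (f i x)) := by
  obtain ⟨i₀, hi₀⟩ := hs
  refine ⟨(hf i₀ hi₀).1, fun x hx y hy a b ha hb hab => ?_⟩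
  have hpos : ∀ z, 0 < ∑ i ∈ s, w i * exp (f i z) := fun z =>
    sum_pos (fun i hi => mul_pos (hw i hi) (exp_pos _)) ⟨i₀, hi₀⟩
  have hexp : ∀ i ∈ s, exp (f i (a • x + b • y)) ≤ exp (f i x) ^ a * exp (f i y) ^ b := by
    intro i hi
    rw [← exp_mul, ← exp_mul, ← exp_add, mul_comm, mul_comm _ b]
    exact exp_le_exp.2 ((hf i hi).2 hx hy ha hb hab)
  calc log (∑ i ∈ s, w i * exp (f i (a • x + b • y)))
      ≤ log ((∑ i ∈ s, w i * exp (f i x)) ^ a * (∑ i ∈ s, w i * exp (f i y)) ^ b) := by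
        refine log_le_log (hpos _) ?_
        calc ∑ i ∈ s, w i * exp (f i (a • x + b • y))
            ≤ ∑ i ∈ s, w i * (exp (f i x) ^ a * exp (f i y) ^ b) :=
              sum_le_sum fun i hi => mul_le_mul_of_nonneg_left (hexp i hi) (hw i hi).le
          _ ≤ _ := sum_mul_rpow_mul_rpow_le (fun i hi => (hw i hi).le) (fun _ _ => (exp_pos _).le)
              (fun _ _ => (exp_pos _).le) (hpos x) (hpos y) ha hb hab
    _ = a • log (∑ i ∈ s, w i * exp (f i x)) + b • log (∑ i ∈ s, w i * exp (f i y)) := by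
        rw [log_mul (rpow_pos_of_pos (hpos x) a).ne' (rpow_pos_of_pos (hpos y) b).ne',
          log_rpow (hpos x), log_rpow (hpos y), smul_eq_mul, smul_eq_mul]

theorem concaveOn_log_one_add_apply_mul {κ : Type*} (j : κ) {c : ℝ} (hc : 0 ≤ c) :
    ConcaveOn ℝ {p : κ → ℝ | ∀ j, 0 ≤ p j} fun p => log (1 + p j * c) := by
  let φ : (κ → ℝ) →ᵃ[ℝ] ℝ := AffineMap.const ℝ (κ → ℝ) (1 : ℝ) + (c • LinearMap.proj j).toAffineMap
  have hφ : ∀ p, φ p = 1 + p j * c := fun p => by simp [φ, mul_comm]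
  rw [show (fun p : κ → ℝ => log (1 + p j * c)) = log ∘ φ from funext fun p => by simp [hφ]]
  exact (strictConcaveOn_log_Ioi.concaveOn.comp_affineMap φ).subset
    (fun p hp => show 0 < φ p by rw [hφ]; nlinarith [mul_nonneg (hp j) hc]) (convex_Ici 0)

end

theorem stmt_1_general {n : ℕ} {I : Type*} [Fintype I] [Nonempty I]
    (μ : ℝ) (hμ : μ < 0)
    (w : I → ℝ) (hw : ∀ i, 0 < w i)
    (a g : I → Fin n → ℝ)
    (ha : ∀ i j, 0 ≤ a i j) (hg : ∀ i j, 0 ≤ g i j) :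
    ConcaveOn ℝ {p : Fin n → ℝ | ∀ j, 0 ≤ p j}
      (fun p : Fin n → ℝ =>
        (1 / μ) * Real.log (∑ i, w i *
          Real.exp (μ * ∑ j, a i j * Real.log (1 + p j * g i j)))) := by
  have hrate : ∀ i, ConcaveOn ℝ {p : Fin n → ℝ | ∀ j, 0 ≤ p j}
      fun p => ∑ j, a i j * log (1 + p j * g i j) := fun i =>
    ConcaveOn.sum (convex_Ici 0) fun j _ =>
      (concaveOn_log_one_add_apply_mul j (hg i j)).smul (ha i j)
  have hlogSumExp := ConvexOn.log_sum_mul_exp univ_nonempty (fun i _ => hw i)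
    fun i _ => (hrate i).const_mul_of_nonpos hμ.le
  exact hlogSumExp.const_mul_of_nonpos (one_div_neg.2 hμ).le

/-- For μ < 0, probability weights `w i > 0` summing to 1, and
rates `r i p = ∑ j, a i j * log (1 + p j * g i j)` with nonnegative constants
`a i j ≥ 0`, `g i j ≥ 0`, the entropic utility
`G p = (1/μ) * log (∑ i, w i * exp (μ * r i p))` is concave on the
nonnegative orthant. -/
theorem stmt_1 {n : ℕ} {I : Type*} [Fintype I] [Nonempty I]
    (μ : ℝ) (hμ : μ < 0)
    (w : I → ℝ) (hw : ∀ i, 0 < w i) (hsum : ∑ i, w i = 1)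
    (a g : I → Fin n → ℝ)
    (ha : ∀ i j, 0 ≤ a i j) (hg : ∀ i j, 0 ≤ g i j) :
    ConcaveOn ℝ {p : Fin n → ℝ | ∀ j, 0 ≤ p j}
      (fun p : Fin n → ℝ =>
        (1 / μ) * Real.log (∑ i, w i *
          Real.exp (μ * ∑ j, a i j * Real.log (1 + p j * g i j)))) :=
  stmt_1_general μ hμ w hw a g ha hg
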